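/- Let n ≥ 1 and μ1 ∈ ℝ with n+μ1 > 1, and let δ ≥ 0 with √δ < 2n+μ1−1 (equivalently n+κ > 0). Then: (i) p_F(n+κ) ≤ p_S(n+μ1) if and only if √δ ≤ n − d_*(n+μ1); (ii) p_F(n+κ) = p_S(n+μ1) if and only if √δ = n − d_*(n+μ1); and (iii) when √δ = n − d_*(n+μ1), both p_F(n+κ) and p_S(n+μ1) are equal to 2/(n−√δ). -/

import Mathlib

/-- Fujita exponent `p_F(ν) = 1 + 2/ν` (as a real number; meaningful for `ν > 0`). -/
noncomputable def pF (ν : ℝ) : ℝ := 1 + 2 / ν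

/-- Strauss exponent `p_S(ν)` (as a real number; meaningful for `ν > 1`). -/
noncomputable def pS (ν : ℝ) : ℝ :=
  (ν + 1 + Real.sqrt (ν ^ 2 + 10 * ν - 7)) / (2 * (ν - 1))

/-- `d_*(ν)`: zero for `ν ≤ 1`, and `(−1−ν+√(ν²+10ν−7))/2` for `ν > 1`. -/
noncomputable def dStar (ν : ℝ) : ℝ :=
  if 1 < ν then (-1 - ν + Real.sqrt (ν ^ 2 + 10 * ν - 7)) / 2 else 0

/-!
Write `ν = n + μ1` and `d = d_*(ν)`. For `ν > 1`, `d` is the positive root of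
`d² + (ν + 1) d = 2 (ν - 1)`, and this quadratic gives
`p_S(ν) = 2 / d = p_F((ν - 1 + d) / 2)`. Since `n + κ - (ν - 1 + d) / 2 = (n - d - √δ) / 2`
and `p_F` is strictly decreasing on `(0, ∞)`, comparing `p_F(n + κ)` with `p_S(ν)` amounts to
comparing `√δ` with `n - d`.
-/

lemma strictAntiOn_pF : StrictAntiOn pF (Set.Ioi 0) := fun a ha b hb hab => by
  have := (div_lt_div_iff_of_pos_left two_pos (Set.mem_Ioi.mp hb) (Set.mem_Ioi.mp ha)).mpr hab
  simp only [pF]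
  linarith

section dStar

variable {ν : ℝ}

lemma sqrt_eq_two_mul_dStar_add (hν : 1 < ν) :
    Real.sqrt (ν ^ 2 + 10 * ν - 7) = 2 * dStar ν + ν + 1 := by
  rw [dStar, if_pos hν]
  ring

lemma dStar_pos (hν : 1 < ν) : 0 < dStar ν := by
  have hR : ν + 1 < Real.sqrt (ν ^ 2 + 10 * ν - 7) :=
    Real.lt_sqrt_of_sq_lt (by nlinarith)
  rw [sqrt_eq_two_mul_dStar_add hν] at hR
  linarith

lemma dStar_sq_add_mul (hν : 1 < ν) : dStar ν ^ 2 + (ν + 1) * dStar ν = 2 * (ν - 1) := by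
  have hR := Real.sq_sqrt (show 0 ≤ ν ^ 2 + 10 * ν - 7 by nlinarith)
  rw [sqrt_eq_two_mul_dStar_add hν] at hR
  linear_combination hR / 4

lemma pS_eq_two_div_dStar (hν : 1 < ν) : pS ν = 2 / dStar ν := by
  have hd := dStar_pos hν
  rw [pS, sqrt_eq_two_mul_dStar_add hν, div_eq_div_iff (by linarith) hd.ne']
  linear_combination 2 * dStar_sq_add_mul hν

lemma pF_half_sub_one_add_dStar (hν : 1 < ν) : pF ((ν - 1 + dStar ν) / 2) = 2 / dStar ν := by
  have hd := dStar_pos hν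
  rw [pF, div_div_eq_mul_div, one_add_div (by linarith), div_eq_div_iff (by linarith) hd.ne']
  linear_combination dStar_sq_add_mul hν

end dStar

theorem pF_pS_comparison_general (n μ1 δ : ℝ) (hnμ : 1 < n + μ1)
    (hδ' : Real.sqrt δ < 2 * n + μ1 - 1) :
    (pF (n + (μ1 - 1 - Real.sqrt δ) / 2) ≤ pS (n + μ1) ↔
      Real.sqrt δ ≤ n - dStar (n + μ1)) ∧
    (pF (n + (μ1 - 1 - Real.sqrt δ) / 2) = pS (n + μ1) ↔
      Real.sqrt δ = n - dStar (n + μ1)) ∧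
    (Real.sqrt δ = n - dStar (n + μ1) →
      pF (n + (μ1 - 1 - Real.sqrt δ) / 2) = 2 / (n - Real.sqrt δ) ∧
      pS (n + μ1) = 2 / (n - Real.sqrt δ)) := by
  set d := dStar (n + μ1)
  set a₀ := (n + μ1 - 1 + d) / 2
  have hd : 0 < d := dStar_pos hnμ
  have ha : n + (μ1 - 1 - Real.sqrt δ) / 2 ∈ Set.Ioi 0 := by simp only [Set.mem_Ioi]; linarith
  have ha₀ : a₀ ∈ Set.Ioi 0 := by simp only [Set.mem_Ioi, a₀]; linarith
  have hshift : n + (μ1 - 1 - Real.sqrt δ) / 2 - a₀ = (n - d - Real.sqrt δ) / 2 := by ring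
  have hpS : pS (n + μ1) = pF a₀ := by
    rw [pS_eq_two_div_dStar hnμ, pF_half_sub_one_add_dStar hnμ]
  refine ⟨?_, ?_, fun hs => ?_⟩
  · rw [hpS, strictAntiOn_pF.le_iff_ge ha ha₀]
    constructor <;> intro h <;> linarith
  · rw [hpS, strictAntiOn_pF.eq_iff_eq ha ha₀]
    constructor <;> intro h <;> linarith
  · have hns : n - Real.sqrt δ = d := by linarith
    have ha_eq : n + (μ1 - 1 - Real.sqrt δ) / 2 = a₀ := by linarith
    rw [hns, ha_eq, hpS, pF_half_sub_one_add_dStar hnμ]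
    exact ⟨rfl, rfl⟩

/-- Comparison of the shifted Fujita and Strauss exponents via `d_*`. -/
theorem pF_pS_comparison (n μ1 δ : ℝ) (hn : 1 ≤ n) (hnμ : 1 < n + μ1)
    (hδ : 0 ≤ δ) (hδ' : Real.sqrt δ < 2 * n + μ1 - 1) :
    (pF (n + (μ1 - 1 - Real.sqrt δ) / 2) ≤ pS (n + μ1) ↔
      Real.sqrt δ ≤ n - dStar (n + μ1)) ∧
    (pF (n + (μ1 - 1 - Real.sqrt δ) / 2) = pS (n + μ1) ↔
      Real.sqrt δ = n - dStar (n + μ1)) ∧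
    (Real.sqrt δ = n - dStar (n + μ1) →
      pF (n + (μ1 - 1 - Real.sqrt δ) / 2) = 2 / (n - Real.sqrt δ) ∧
      pS (n + μ1) = 2 / (n - Real.sqrt δ)) :=
  pF_pS_comparison_general n μ1 δ hnμ hδ'
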